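/- Let 𝔟 ⊆ sl(2,ℂ) be the set of lower-triangular traceless 2×2 complex matrices (the ℂ-span of E₂₁ and diag(1,−1)), and let x ∈ H₃ be the state x(a,b,c) = 1/2 if (a,b,c) ∈ {(0,0,0),(1,0,0),(0,1,0),(0,0,1)} and 0 otherwise. Then the ℂ-linear span of {x} ∪ {(A⊗I⊗I)x + (I⊗B⊗I)x + (I⊗I⊗C)x : A,B,C ∈ 𝔟} has complex dimension 7. (This is the key computation showing that the closure of the W SLOCC class is a spherical variety: a Borel orbit has full dimension 6 in it.) -/
import Mathlib


open scoped BigOperators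

/-- The three-qubit Hilbert space. -/
abbrev H3 := (Fin 2 × Fin 2 × Fin 2) → ℂ

/-- Squared Hermitian norm of a vector in `H3`. -/
noncomputable def normSq3 (v : H3) : ℝ := ∑ x : Fin 2 × Fin 2 × Fin 2, Complex.normSq (v x)

/-- First one-qubit reduced density matrix. -/
noncomputable def rho1 (v : H3) : Matrix (Fin 2) (Fin 2) ℂ :=
  Matrix.of fun a a' => ∑ b : Fin 2, ∑ c : Fin 2, v (a, b, c) * star (v (a', b, c))

/-- Second one-qubit reduced density matrix. -/
noncomputable def rho2 (v : H3) : Matrix (Fin 2) (Fin 2) ℂ :=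
  Matrix.of fun b b' => ∑ a : Fin 2, ∑ c : Fin 2, v (a, b, c) * star (v (a, b', c))

/-- Third one-qubit reduced density matrix. -/
noncomputable def rho3 (v : H3) : Matrix (Fin 2) (Fin 2) ℂ :=
  Matrix.of fun c c' => ∑ a : Fin 2, ∑ b : Fin 2, v (a, b, c) * star (v (a, b, c'))

/-- Minimal (real) eigenvalue of a 2×2 complex matrix. -/
noncomputable def minEig (ρ : Matrix (Fin 2) (Fin 2) ℂ) : ℝ :=
  sInf {t : ℝ | (t : ℂ) ∈ spectrum ℂ ρ}

noncomputable def p1 (v : H3) : ℝ := minEig (rho1 v)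
noncomputable def p2 (v : H3) : ℝ := minEig (rho2 v)
noncomputable def p3 (v : H3) : ℝ := minEig (rho3 v)

/-- The action of a triple of 2×2 matrices on `H3` by the tensor product. -/
noncomputable def tensor3 (A1 A2 A3 : Matrix (Fin 2) (Fin 2) ℂ) (v : H3) : H3 :=
  fun x => ∑ a' : Fin 2, ∑ b' : Fin 2, ∑ c' : Fin 2,
    A1 x.1 a' * A2 x.2.1 b' * A3 x.2.2 c' * v (a', b', c')

/-- Local unitary equivalence of three-qubit states. -/
def LUequiv (v w : H3) : Prop :=
  ∃ U1 U2 U3 : Matrix (Fin 2) (Fin 2) ℂ,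
    U1 ∈ Matrix.unitaryGroup (Fin 2) ℂ ∧ U2 ∈ Matrix.unitaryGroup (Fin 2) ℂ ∧
    U3 ∈ Matrix.unitaryGroup (Fin 2) ℂ ∧ w = tensor3 U1 U2 U3 v

/-- The three-qubit W state. -/
noncomputable def wState : H3 := fun x =>
  if (x.1 = 1 ∧ x.2.1 = 0 ∧ x.2.2 = 0) ∨ (x.1 = 0 ∧ x.2.1 = 1 ∧ x.2.2 = 0) ∨
      (x.1 = 0 ∧ x.2.1 = 0 ∧ x.2.2 = 1)
  then ((1 / Real.sqrt 3 : ℝ) : ℂ) else 0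

/-- The SLOCC class of the W state. -/
def WClass : Set H3 :=
  {v | ∃ (A1 A2 A3 : Matrix (Fin 2) (Fin 2) ℂ) (l : ℂ),
    A1.det = 1 ∧ A2.det = 1 ∧ A3.det = 1 ∧ l ≠ 0 ∧ v = l • tensor3 A1 A2 A3 wState}

/-- Membership in the Borel subalgebra `𝔟 ⊆ sl(2,ℂ)` of lower-triangular traceless
matrices. -/
def IsLowerTriangularTraceless (A : Matrix (Fin 2) (Fin 2) ℂ) : Prop :=
  A 0 1 = 0 ∧ A.trace = 0

/-- The state `(|000⟩+|100⟩+|010⟩+|001⟩)/2` in the W SLOCC class. -/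
noncomputable def xBorel : H3 := fun x =>
  if x = ((0 : Fin 2), (0 : Fin 2), (0 : Fin 2)) ∨ x = ((1 : Fin 2), (0 : Fin 2), (0 : Fin 2)) ∨
      x = ((0 : Fin 2), (1 : Fin 2), (0 : Fin 2)) ∨ x = ((0 : Fin 2), (0 : Fin 2), (1 : Fin 2))
  then (1 / 2 : ℂ) else 0

def myBorelH : Matrix (Fin 2) (Fin 2) ℂ := !![1,0;0,-1]
def myBorelE : Matrix (Fin 2) (Fin 2) ℂ := !![0,0;1,0]

def myBorelIdx : Fin 7 → Fin 2 × Fin 2 × Fin 2 :=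
  ![(0,0,0), (1,0,0), (0,1,0), (0,0,1), (1,1,0), (1,0,1), (0,1,1)]

noncomputable def myBorelG : Fin 7 → H3 := fun i => Pi.basisFun ℂ _ (myBorelIdx i)

@[simp] lemma myIdx0 : myBorelIdx 0 = (0,0,0) := rfl
@[simp] lemma myIdx1 : myBorelIdx 1 = (1,0,0) := rfl
@[simp] lemma myIdx2 : myBorelIdx 2 = (0,1,0) := rfl
@[simp] lemma myIdx3 : myBorelIdx 3 = (0,0,1) := rfl
@[simp] lemma myIdx4 : myBorelIdx 4 = (1,1,0) := rfl
@[simp] lemma myIdx5 : myBorelIdx 5 = (1,0,1) := rfl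
@[simp] lemma myIdx6 : myBorelIdx 6 = (0,1,1) := rfl

lemma myBorelG_li : LinearIndependent ℂ myBorelG :=
  (Pi.basisFun ℂ _).linearIndependent.comp myBorelIdx (by decide)

lemma myBorel_mem_span (v : H3) (hv : v (1, 1, 1) = 0) :
    v ∈ Submodule.span ℂ (Set.range myBorelG) := by
  have h : v = ∑ i : Fin 7, v (myBorelIdx i) • myBorelG i := by
    have hv' : v (1 : Fin 2 × Fin 2 × Fin 2) = 0 := hv
    funext p
    obtain ⟨a, b, c⟩ := p
    fin_cases a <;> fin_cases b <;> fin_cases c <;>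
      simp [myBorelG, Fin.sum_univ_seven, Pi.single_apply, Prod.ext_iff, hv, hv']
  rw [h]
  exact Submodule.sum_mem _ fun i _ =>
    Submodule.smul_mem _ _ (Submodule.subset_span ⟨i, rfl⟩)

lemma trH : IsLowerTriangularTraceless myBorelH :=
  ⟨by simp [myBorelH], by simp [Matrix.trace_fin_two, myBorelH]⟩

lemma trE : IsLowerTriangularTraceless myBorelE :=
  ⟨by simp [myBorelE], by simp [Matrix.trace_fin_two, myBorelE]⟩

lemma trZ : IsLowerTriangularTraceless 0 := ⟨by simp, by simp⟩

lemma myZ1 : tensor3 0 1 1 xBorel = 0 := by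
  funext p; simp [tensor3]

lemma myZ2 : tensor3 1 0 1 xBorel = 0 := by
  funext p; simp [tensor3]

lemma myZ3 : tensor3 1 1 0 xBorel = 0 := by
  funext p; simp [tensor3]

set_option maxHeartbeats 1000000 in
/-- the span of `xBorel` together with the tangent vectors generated by
the Borel subalgebra `𝔟^{⊕3}` at `xBorel` has complex dimension `7`. -/
theorem borel_tangent_space_at_translated_W_state :
    Module.finrank ℂ ↥(Submodule.span ℂ ({xBorel} ∪
      {u : H3 | ∃ A B C : Matrix (Fin 2) (Fin 2) ℂ,
        IsLowerTriangularTraceless A ∧ IsLowerTriangularTraceless B ∧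
        IsLowerTriangularTraceless C ∧
        u = tensor3 A 1 1 xBorel + tensor3 1 B 1 xBorel + tensor3 1 1 C xBorel})) = 7 := by
  set S : Set H3 := ({xBorel} ∪
      {u : H3 | ∃ A B C : Matrix (Fin 2) (Fin 2) ℂ,
        IsLowerTriangularTraceless A ∧ IsLowerTriangularTraceless B ∧
        IsLowerTriangularTraceless C ∧
        u = tensor3 A 1 1 xBorel + tensor3 1 B 1 xBorel + tensor3 1 1 C xBorel}) with hS
  have hx : xBorel ∈ Submodule.span ℂ S :=
    Submodule.subset_span (Set.mem_union_left _ rfl)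
  have ht : ∀ A B C : Matrix (Fin 2) (Fin 2) ℂ, IsLowerTriangularTraceless A →
      IsLowerTriangularTraceless B → IsLowerTriangularTraceless C →
      tensor3 A 1 1 xBorel + tensor3 1 B 1 xBorel + tensor3 1 1 C xBorel ∈
        Submodule.span ℂ S := fun A B C hA hB hC =>
    Submodule.subset_span (Set.mem_union_right _ ⟨A, B, C, hA, hB, hC, rfl⟩)
  have h1 : tensor3 myBorelH 1 1 xBorel ∈ Submodule.span ℂ S := by
    have := ht myBorelH 0 0 trH trZ trZ
    rwa [myZ2, myZ3, add_zero, add_zero] at this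
  have h2 : tensor3 1 myBorelH 1 xBorel ∈ Submodule.span ℂ S := by
    have := ht 0 myBorelH 0 trZ trH trZ
    rwa [myZ1, myZ3, zero_add, add_zero] at this
  have h3 : tensor3 1 1 myBorelH xBorel ∈ Submodule.span ℂ S := by
    have := ht 0 0 myBorelH trZ trZ trH
    rwa [myZ1, myZ2, zero_add, zero_add] at this
  have u1 : tensor3 myBorelE 1 1 xBorel ∈ Submodule.span ℂ S := by
    have := ht myBorelE 0 0 trE trZ trZ
    rwa [myZ2, myZ3, add_zero, add_zero] at this
  have u2 : tensor3 1 myBorelE 1 xBorel ∈ Submodule.span ℂ S := by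
    have := ht 0 myBorelE 0 trZ trE trZ
    rwa [myZ1, myZ3, zero_add, add_zero] at this
  have u3 : tensor3 1 1 myBorelE xBorel ∈ Submodule.span ℂ S := by
    have := ht 0 0 myBorelE trZ trZ trE
    rwa [myZ1, myZ2, zero_add, zero_add] at this
  have hspan : Submodule.span ℂ S = Submodule.span ℂ (Set.range myBorelG) := by
    apply le_antisymm
    · rw [Submodule.span_le]
      rintro u (rfl | ⟨A, B, C, hA, hB, hC, rfl⟩)
      · exact myBorel_mem_span _ (by simp [xBorel, Prod.ext_iff])
      · refine myBorel_mem_span _ ?_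
        simp [tensor3, xBorel, Fin.sum_univ_two, Matrix.one_apply, Prod.ext_iff]
    · rw [Submodule.span_le]
      have hg1 : myBorelG 1 ∈ Submodule.span ℂ S := by
        have he : myBorelG 1 = xBorel - tensor3 myBorelH 1 1 xBorel := by
          funext p; obtain ⟨a, b, c⟩ := p
          fin_cases a <;> fin_cases b <;> fin_cases c <;>
            simp [myBorelG, tensor3, xBorel, myBorelH, Fin.sum_univ_two,
              Matrix.one_apply, Pi.single_apply, Prod.ext_iff] <;> norm_num
        rw [he]; exact sub_mem hx h1
      have hg2 : myBorelG 2 ∈ Submodule.span ℂ S := by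
        have he : myBorelG 2 = xBorel - tensor3 1 myBorelH 1 xBorel := by
          funext p; obtain ⟨a, b, c⟩ := p
          fin_cases a <;> fin_cases b <;> fin_cases c <;>
            simp [myBorelG, tensor3, xBorel, myBorelH, Fin.sum_univ_two,
              Matrix.one_apply, Pi.single_apply, Prod.ext_iff] <;> norm_num
        rw [he]; exact sub_mem hx h2
      have hg3 : myBorelG 3 ∈ Submodule.span ℂ S := by
        have he : myBorelG 3 = xBorel - tensor3 1 1 myBorelH xBorel := by
          funext p; obtain ⟨a, b, c⟩ := p
          fin_cases a <;> fin_cases b <;> fin_cases c <;>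
            simp [myBorelG, tensor3, xBorel, myBorelH, Fin.sum_univ_two,
              Matrix.one_apply, Pi.single_apply, Prod.ext_iff] <;> norm_num
        rw [he]; exact sub_mem hx h3
      have hg0 : myBorelG 0 ∈ Submodule.span ℂ S := by
        have he : myBorelG 0 = tensor3 myBorelH 1 1 xBorel + tensor3 1 myBorelH 1 xBorel
            + tensor3 1 1 myBorelH xBorel - xBorel := by
          funext p; obtain ⟨a, b, c⟩ := p
          fin_cases a <;> fin_cases b <;> fin_cases c <;>
            simp [myBorelG, tensor3, xBorel, myBorelH, Fin.sum_univ_two,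
              Matrix.one_apply, Pi.single_apply, Prod.ext_iff] <;> norm_num
        rw [he]; exact sub_mem (add_mem (add_mem h1 h2) h3) hx
      have hg4 : myBorelG 4 ∈ Submodule.span ℂ S := by
        have he : myBorelG 4 = tensor3 myBorelE 1 1 xBorel + tensor3 1 myBorelE 1 xBorel
            - tensor3 1 1 myBorelE xBorel
            - (1/2 : ℂ) • myBorelG 1 - (1/2 : ℂ) • myBorelG 2 + (1/2 : ℂ) • myBorelG 3 := by
          funext p; obtain ⟨a, b, c⟩ := p
          fin_cases a <;> fin_cases b <;> fin_cases c <;>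
            simp [myBorelG, tensor3, xBorel, myBorelE, Fin.sum_univ_two,
              Matrix.one_apply, Pi.single_apply, Prod.ext_iff] <;> norm_num
        rw [he]
        exact add_mem (sub_mem (sub_mem (sub_mem (add_mem u1 u2) u3)
          (Submodule.smul_mem _ _ hg1)) (Submodule.smul_mem _ _ hg2))
          (Submodule.smul_mem _ _ hg3)
      have hg5 : myBorelG 5 ∈ Submodule.span ℂ S := by
        have he : myBorelG 5 = tensor3 myBorelE 1 1 xBorel - tensor3 1 myBorelE 1 xBorel
            + tensor3 1 1 myBorelE xBorel
            - (1/2 : ℂ) • myBorelG 1 + (1/2 : ℂ) • myBorelG 2 - (1/2 : ℂ) • myBorelG 3 := by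
          funext p; obtain ⟨a, b, c⟩ := p
          fin_cases a <;> fin_cases b <;> fin_cases c <;>
            simp [myBorelG, tensor3, xBorel, myBorelE, Fin.sum_univ_two,
              Matrix.one_apply, Pi.single_apply, Prod.ext_iff] <;> norm_num
        rw [he]
        exact sub_mem (add_mem (sub_mem (add_mem (sub_mem u1 u2) u3)
          (Submodule.smul_mem _ _ hg1)) (Submodule.smul_mem _ _ hg2))
          (Submodule.smul_mem _ _ hg3)
      have hg6 : myBorelG 6 ∈ Submodule.span ℂ S := by
        have he : myBorelG 6 = tensor3 1 myBorelE 1 xBorel + tensor3 1 1 myBorelE xBorel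
            - tensor3 myBorelE 1 1 xBorel
            + (1/2 : ℂ) • myBorelG 1 - (1/2 : ℂ) • myBorelG 2 - (1/2 : ℂ) • myBorelG 3 := by
          funext p; obtain ⟨a, b, c⟩ := p
          fin_cases a <;> fin_cases b <;> fin_cases c <;>
            simp [myBorelG, tensor3, xBorel, myBorelE, Fin.sum_univ_two,
              Matrix.one_apply, Pi.single_apply, Prod.ext_iff] <;> norm_num
        rw [he]
        exact sub_mem (sub_mem (add_mem (sub_mem (add_mem u2 u3) u1)
          (Submodule.smul_mem _ _ hg1)) (Submodule.smul_mem _ _ hg2))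
          (Submodule.smul_mem _ _ hg3)
      rintro u ⟨i, rfl⟩
      fin_cases i
      · exact hg0
      · exact hg1
      · exact hg2
      · exact hg3
      · exact hg4
      · exact hg5
      · exact hg6
  rw [hspan, finrank_span_eq_card myBorelG_li]
  simp
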